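/- arXiv:2201.06766 — 3 statements merged into one kernel-verified Lean document; each statement's English description precedes it below -/
import Mathlib

section
/- Let λ ∈ ℤⁿ be a regular anti-dominant integral weight (λ_1 ≥ … ≥ λ_n ≥ n, and the |λ_i − i| pairwise distinct and nonzero) and σ ∈ W_n. Write ω = σ·λ and suppose ω is dominant (ω_1 ≥ … ≥ ω_n, with ω_i − ω_{i+1} ∈ ℤ) and satisfies the unitarizability inequality ω_n ≥ n − p(ω) − q(ω)/2, where p(ω) = #{i : ω_i = ω_n} and q(ω) = #{i : ω_i = ω_n + 1}. If ω ≠ λ, then λ_n = n + 1 and ω_n = n − p(ω). -/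
/-- The action of a signed permutation on an integer vector. -/
def signedPermAct {n : ℕ} (σ : Equiv.Perm (Fin n)) (ε : Fin n → ℤˣ)
    (v : Fin n → ℤ) : Fin n → ℤ :=
  fun i => (ε i : ℤ) * v (σ.symm i)

/-- `ρ = (−1, −2, …, −n)`. -/
def rhoC (n : ℕ) : Fin n → ℤ := fun i => -((i : ℤ) + 1)

/-- The dot action `w·λ = w(λ+ρ) − ρ`. -/
def dotAct {n : ℕ} (σ : Equiv.Perm (Fin n)) (ε : Fin n → ℤˣ)
    (lam : Fin n → ℤ) : Fin n → ℤ :=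
  fun i => signedPermAct σ ε (fun j => lam j + rhoC n j) i - rhoC n i

/-- `p(ω) = #{i : ωᵢ = ωₙ}`. -/
def pCount {n : ℕ} (hn : 0 < n) (ω : Fin n → ℤ) : ℕ :=
  (Finset.univ.filter fun i : Fin n => ω i = ω ⟨n - 1, Nat.sub_lt hn one_pos⟩).card

/-- `q(ω) = #{i : ωᵢ = ωₙ + 1}`. -/
def qCount {n : ℕ} (hn : 0 < n) (ω : Fin n → ℤ) : ℕ :=
  (Finset.univ.filter fun i : Fin n => ω i = ω ⟨n - 1, Nat.sub_lt hn one_pos⟩ + 1).card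

/-- A strictly monotone self-map of `Fin n` moves every point up. -/
lemma finStrictMono_le {n : ℕ} {g : Fin n → Fin n} (hg : StrictMono g) : ∀ i, i ≤ g i := by
  have key : ∀ m : ℕ, ∀ h : m < n, m ≤ (g ⟨m, h⟩).val := by
    intro m
    induction m with
    | zero => intro h; exact Nat.zero_le _
    | succ k ih =>
      intro h
      have hk : k < n := Nat.lt_of_succ_lt h
      have h1 : g ⟨k, hk⟩ < g ⟨k + 1, h⟩ := hg (by simp [Fin.lt_def])
      have := ih hk
      simp only [Fin.lt_def] at h1
      omega
  intro i
  have := key i.val i.isLt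
  rw [Fin.le_def]
  exact this

/-- Let `λ ∈ ℤⁿ` be a regular anti-dominant integral weight, `σ ∈ Wₙ`, and `ω = σ·λ`.
If `ω` is dominant, satisfies the unitarizability inequality
`ωₙ ≥ n − p(ω) − q(ω)/2`, and `ω ≠ λ`, then `λₙ = n + 1` and `ωₙ = n − p(ω)`. -/
theorem dot_orbit_unitarizable_lemma {n : ℕ} (hn : 0 < n) (lam : Fin n → ℤ)
    (hanti : Antitone lam)
    (hlast : (n : ℤ) ≤ lam ⟨n - 1, Nat.sub_lt hn one_pos⟩)
    (hreg : (∀ i j : Fin n, i ≠ j → |lam i - ((i : ℤ) + 1)| ≠ |lam j - ((j : ℤ) + 1)|) ∧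
      ∀ i : Fin n, |lam i - ((i : ℤ) + 1)| ≠ 0)
    (σ : Equiv.Perm (Fin n)) (ε : Fin n → ℤˣ) (ω : Fin n → ℤ)
    (hω : ω = dotAct σ ε lam) (hdom : Antitone ω)
    (hunit : 2 * ω ⟨n - 1, Nat.sub_lt hn one_pos⟩ ≥
      2 * (n : ℤ) - 2 * (pCount hn ω : ℤ) - (qCount hn ω : ℤ))
    (hne : ω ≠ lam) :
    lam ⟨n - 1, Nat.sub_lt hn one_pos⟩ = (n : ℤ) + 1 ∧
      ω ⟨n - 1, Nat.sub_lt hn one_pos⟩ = (n : ℤ) - (pCount hn ω : ℤ) := by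
  obtain ⟨hreg1, hreg2⟩ := hreg
  set last : Fin n := ⟨n - 1, Nat.sub_lt hn one_pos⟩ with hlastdef
  have hlastval : last.val = n - 1 := rfl
  have hle_last : ∀ j : Fin n, j ≤ last := by
    intro j; rw [Fin.le_def, hlastval]; have := j.isLt; omega
  have hclast : ((last : ℤ)) = (n : ℤ) - 1 := by
    have h : ((last : ℤ)) = ((n - 1 : ℕ) : ℤ) := rfl
    rw [h]; omega
  -- the shifted weight μ i = lam i - (i+1)
  have hμlow : ∀ i : Fin n, lam last - ((last : ℤ) + 1) ≤ lam i - ((i : ℤ) + 1) := by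
    intro i
    have h1 : lam last ≤ lam i := hanti (hle_last i)
    have h2 : (i.val : ℤ) ≤ (n : ℤ) - 1 := by have := i.isLt; omega
    have h3 : ((i : ℤ)) = (i.val : ℤ) := rfl
    rw [h3, hclast]
    omega
  have hA0 : 1 ≤ lam last - ((last : ℤ) + 1) := by
    have h0 : lam last - ((last : ℤ) + 1) ≠ 0 := by
      intro h; exact hreg2 last (by rw [h, abs_zero])
    rw [hclast] at h0 ⊢
    omega
  have hμ1 : ∀ i : Fin n, 1 ≤ lam i - ((i : ℤ) + 1) := fun i => hA0.trans (hμlow i)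
  -- the shifted image ν i = ω i - (i+1) = ε i * μ (σ.symm i)
  have hν : ∀ i : Fin n,
      ω i - ((i : ℤ) + 1) = (ε i : ℤ) * (lam (σ.symm i) - ((σ.symm i : ℤ) + 1)) := by
    intro i
    rw [hω]
    simp only [dotAct, signedPermAct, rhoC]
    ring
  have habs : ∀ i : Fin n,
      |ω i - ((i : ℤ) + 1)| = lam (σ.symm i) - ((σ.symm i : ℤ) + 1) := by
    intro i
    rw [hν i, abs_mul, Int.isUnit_iff_abs_eq.mp (ε i).isUnit, one_mul,
      abs_of_nonneg (by linarith [hμ1 (σ.symm i)])]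
  have hνne : ∀ i : Fin n, ω i - ((i : ℤ) + 1) ≠ 0 := by
    intro i h
    have h1 := habs i
    rw [h, abs_zero] at h1
    have := hμ1 (σ.symm i)
    omega
  have hinj : ∀ i j : Fin n, |ω i - ((i : ℤ) + 1)| = |ω j - ((j : ℤ) + 1)| → i = j := by
    intro i j h
    by_contra hij
    have hs : σ.symm i ≠ σ.symm j := fun hc => hij (σ.symm.injective hc)
    have hd := hreg1 (σ.symm i) (σ.symm j) hs
    rw [habs i, habs j] at h
    exact hd (by rw [abs_of_nonneg (by linarith [hμ1 (σ.symm i)]),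
      abs_of_nonneg (by linarith [hμ1 (σ.symm j)]), h])
  have hνanti : ∀ i j : Fin n, i < j → ω j - ((j : ℤ) + 1) < ω i - ((i : ℤ) + 1) := by
    intro i j hij
    have h1 : ω j ≤ ω i := hdom (le_of_lt hij)
    have h2 : i.val < j.val := Fin.lt_def.mp hij
    have h3 : ((i : ℤ)) = (i.val : ℤ) := rfl
    have h4 : ((j : ℤ)) = (j.val : ℤ) := rfl
    rw [h3, h4]
    omega
  have hμanti : ∀ a b : Fin n, a < b →
      lam b - ((b : ℤ) + 1) < lam a - ((a : ℤ) + 1) := by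
    intro a b hab
    have h1 : lam b ≤ lam a := hanti (le_of_lt hab)
    have h2 : a.val < b.val := Fin.lt_def.mp hab
    have h3 : ((a : ℤ)) = (a.val : ℤ) := rfl
    have h4 : ((b : ℤ)) = (b.val : ℤ) := rfl
    rw [h3, h4]
    omega
  -- ν at the last index is negative
  have hνlast : ω last - ((last : ℤ) + 1) < 0 := by
    by_contra hpos
    push_neg at hpos
    have hpos' : 0 < ω last - ((last : ℤ) + 1) := lt_of_le_of_ne hpos (Ne.symm (hνne last))
    have hall : ∀ i : Fin n, 0 < ω i - ((i : ℤ) + 1) := by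
      intro i
      rcases lt_or_eq_of_le (hle_last i) with h | h
      · exact lt_trans hpos' (hνanti i last h)
      · rw [h]; exact hpos'
    have hposval : ∀ i : Fin n,
        ω i - ((i : ℤ) + 1) = lam (σ.symm i) - ((σ.symm i : ℤ) + 1) := by
      intro i
      rw [← habs i, abs_of_pos (hall i)]
    have hsm : StrictMono (σ.symm : Fin n → Fin n) := by
      intro i j hij
      have h1 := hνanti i j hij
      rw [hposval i, hposval j] at h1
      by_contra hc
      push_neg at hc
      rcases lt_or_eq_of_le hc with h | h
      · have := hμanti _ _ h
        linarith
      · rw [h] at h1; exact lt_irrefl _ h1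
    have hsm2 : StrictMono (σ : Fin n → Fin n) := by
      intro i j hij
      by_contra hc
      push_neg at hc
      have h1 := hsm.monotone hc
      simp only [Equiv.symm_apply_apply] at h1
      exact absurd h1 (not_le.mpr hij)
    have hid : ∀ i : Fin n, σ.symm i = i := by
      intro i
      have h1 := finStrictMono_le hsm i
      have h2 := finStrictMono_le hsm2 (σ.symm i)
      rw [Equiv.apply_symm_apply] at h2
      exact le_antisymm h2 h1
    apply hne
    funext i
    have h := hposval i
    rw [hid i] at h
    omega
  have hωlt : ω last ≤ (n : ℤ) - 1 := by rw [hclast] at hνlast; omega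
  -- the p-block
  set S := Finset.univ.filter fun i : Fin n => ω i = ω last with hSdef
  have hp : pCount hn ω = S.card := rfl
  have hlastS : last ∈ S := by rw [hSdef, Finset.mem_filter]; exact ⟨Finset.mem_univ _, rfl⟩
  have hSne : S.Nonempty := ⟨last, hlastS⟩
  set i0 := S.min' hSne with hi0def
  have hi0S : i0 ∈ S := S.min'_mem hSne
  have hωi0 : ω i0 = ω last := (Finset.mem_filter.mp hi0S).2
  have hup : ∀ j, i0 ≤ j → ω j = ω last := by
    intro j hj
    have h1 : ω j ≤ ω i0 := hdom hj
    have h2 : ω last ≤ ω j := hdom (hle_last j)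
    omega
  have hSIci : S = Finset.Ici i0 := by
    ext j
    rw [Finset.mem_Ici, hSdef, Finset.mem_filter]
    constructor
    · intro h
      exact S.min'_le j (by rw [hSdef, Finset.mem_filter]; exact ⟨Finset.mem_univ _, h.2⟩)
    · intro h; exact ⟨Finset.mem_univ _, hup j h⟩
  have hpcard : pCount hn ω = n - i0.val := by
    rw [hp, hSIci, Fin.card_Ici]
  have hi0lt := i0.isLt
  have hi0val : i0.val = n - pCount hn ω := by omega
  have hppos : 1 ≤ pCount hn ω := by
    rw [hp]; exact Finset.card_pos.mpr hSne
  have hpn : pCount hn ω ≤ n := by omega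
  have hSmem : ∀ j : Fin n, n - pCount hn ω ≤ j.val → ω j = ω last := by
    intro j hj
    exact hup j (by rw [Fin.le_def, hi0val]; exact hj)
  have hSmem' : ∀ j : Fin n, ω j = ω last → n - pCount hn ω ≤ j.val := by
    intro j h
    have hjS : j ∈ S := by rw [hSdef, Finset.mem_filter]; exact ⟨Finset.mem_univ _, h⟩
    rw [hSIci, Finset.mem_Ici, Fin.le_def, hi0val] at hjS
    exact hjS
  -- constraint from the p-block: ω last ≤ n - p
  have hA : ω last ≤ (n : ℤ) - (pCount hn ω : ℤ) := by
    by_contra hc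
    push_neg at hc
    have hω1 : 1 ≤ ω last := by omega
    set v : ℕ := (ω last).toNat - 1 with hv
    have hv1 : (v : ℤ) = ω last - 1 := by omega
    have hvlt : v < n := by omega
    have hvge : n - pCount hn ω ≤ v := by omega
    have hωv := hSmem ⟨v, hvlt⟩ hvge
    have hz := hνne ⟨v, hvlt⟩
    have hcv : ((⟨v, hvlt⟩ : Fin n) : ℤ) = (v : ℤ) := rfl
    rw [hcv, hωv] at hz
    omega
  -- the q-block
  set T := Finset.univ.filter fun i : Fin n => ω i = ω last + 1 with hTdef
  have hqT : qCount hn ω = T.card := rfl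
  have hq0 : qCount hn ω = 0 := by
    rcases Nat.eq_zero_or_pos (qCount hn ω) with h | hqpos
    · exact h
    exfalso
    have hTne : T.Nonempty := Finset.card_pos.mp (by rw [← hqT]; exact hqpos)
    set i1 := T.min' hTne with hi1def
    have hi1T : i1 ∈ T := T.min'_mem hTne
    have hωi1 : ω i1 = ω last + 1 := (Finset.mem_filter.mp hi1T).2
    have hTlt : ∀ j : Fin n, ω j = ω last + 1 → j.val < n - pCount hn ω := by
      intro j h
      by_contra hcj
      push_neg at hcj
      have := hSmem j hcj
      omega
    have hTup : ∀ j, i1 ≤ j → j.val < n - pCount hn ω → ω j = ω last + 1 := by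
      intro j h1 h2
      have ha : ω j ≤ ω i1 := hdom h1
      have hb : ω last ≤ ω j := hdom (hle_last j)
      have hcne : ω j ≠ ω last := by
        intro h
        have := hSmem' j h
        omega
      omega
    have hnp_lt : n - pCount hn ω < n := by omega
    have hTIco : T = Finset.Ico i1 ⟨n - pCount hn ω, hnp_lt⟩ := by
      ext j
      rw [Finset.mem_Ico, hTdef, Finset.mem_filter]
      constructor
      · intro h
        refine ⟨T.min'_le j (by rw [hTdef, Finset.mem_filter]; exact ⟨Finset.mem_univ _, h.2⟩), ?_⟩
        rw [Fin.lt_def]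
        exact hTlt j h.2
      · intro h
        exact ⟨Finset.mem_univ _, hTup j h.1 (Fin.lt_def.mp h.2)⟩
    have hqcard : qCount hn ω = (n - pCount hn ω) - i1.val := by
      rw [hqT, hTIco, Fin.card_Ico]
    have hi1lt : i1.val < n - pCount hn ω := hTlt i1 hωi1
    have hi1val : i1.val = n - pCount hn ω - qCount hn ω := by omega
    have hTmem : ∀ j : Fin n, n - pCount hn ω - qCount hn ω ≤ j.val →
        j.val < n - pCount hn ω → ω j = ω last + 1 := by
      intro j h1 h2
      exact hTup j (by rw [Fin.le_def, hi1val]; exact h1) h2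
    have hpq : pCount hn ω + qCount hn ω ≤ n := by omega
    -- constraint C: 2t ≥ 2p + q, where t = n - ω last
    have hC : ¬ (2 * ((n : ℤ) - ω last) < 2 * (pCount hn ω : ℤ) + (qCount hn ω : ℤ)) := by
      intro hlt
      set m : ℕ := (2 * ((n : ℤ) - ω last) - 2 * (pCount hn ω : ℤ) + 1).toNat with hm
      have hm1 : (m : ℤ) = 2 * ((n : ℤ) - ω last) - 2 * (pCount hn ω : ℤ) + 1 := by omega
      have hm2 : 1 ≤ m := by omega
      have hm3 : m ≤ qCount hn ω := by omega
      have hilt : n - pCount hn ω < n := by omega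
      have hjlt : n - pCount hn ω - m < n := by omega
      set i : Fin n := ⟨n - pCount hn ω, hilt⟩ with hidef
      set j : Fin n := ⟨n - pCount hn ω - m, hjlt⟩ with hjdef
      have hi : ω i = ω last := hSmem i (le_refl _)
      have hj : ω j = ω last + 1 := hTmem j
        (by show n - pCount hn ω - qCount hn ω ≤ n - pCount hn ω - m; omega)
        (by show n - pCount hn ω - m < n - pCount hn ω; omega)
      have hci : ((i : ℤ)) = ((n - pCount hn ω : ℕ) : ℤ) := rfl
      have hcj : ((j : ℤ)) = ((n - pCount hn ω - m : ℕ) : ℤ) := rfl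
      have e1 : |ω i - ((i : ℤ) + 1)| = (n : ℤ) - ω last - (pCount hn ω : ℤ) + 1 := by
        rw [hi, hci]
        have heq : ω last - (((n - pCount hn ω : ℕ) : ℤ) + 1) =
            -((n : ℤ) - ω last - (pCount hn ω : ℤ) + 1) := by omega
        rw [heq, abs_neg, abs_of_nonneg (by omega)]
      have e2 : |ω j - ((j : ℤ) + 1)| = (n : ℤ) - ω last - (pCount hn ω : ℤ) + 1 := by
        rw [hj, hcj]
        have heq : ω last + 1 - (((n - pCount hn ω - m : ℕ) : ℤ) + 1) =
            (n : ℤ) - ω last - (pCount hn ω : ℤ) + 1 := by omega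
        rw [heq, abs_of_nonneg (by omega)]
      have hij : i = j := hinj i j (e1.trans e2.symm)
      have hvv : n - pCount hn ω = n - pCount hn ω - m := by
        have := congrArg Fin.val hij
        rw [hidef, hjdef] at this
        simpa using this
      omega
    push_neg at hC
    -- now 2t = 2p + q exactly, so p + 1 ≤ t ≤ p + q, giving a vanishing ν in the q-block
    have h2t : 2 * ((n : ℤ) - ω last) = 2 * (pCount hn ω : ℤ) + (qCount hn ω : ℤ) := by omega
    have hω0 : 0 ≤ ω last := by omega
    set v : ℕ := (ω last).toNat with hv
    have hv1 : (v : ℤ) = ω last := by omega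
    have hvlt : v < n := by omega
    have hωv := hTmem ⟨v, hvlt⟩
      (by show n - pCount hn ω - qCount hn ω ≤ v; omega)
      (by show v < n - pCount hn ω; omega)
    have hz := hνne ⟨v, hvlt⟩
    have hcv : ((⟨v, hvlt⟩ : Fin n) : ℤ) = (v : ℤ) := rfl
    rw [hcv, hωv] at hz
    omega
  -- conclusion for ω
  have hωlast : ω last = (n : ℤ) - (pCount hn ω : ℤ) := by omega
  refine ⟨?_, hωlast⟩
  -- conclusion for λ: the value 1 appears among the μ's
  have hilt : n - pCount hn ω < n := by omega
  set i : Fin n := ⟨n - pCount hn ω, hilt⟩ with hidef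
  have hi : ω i = ω last := hSmem i (le_refl _)
  have hci : ((i : ℤ)) = ((n - pCount hn ω : ℕ) : ℤ) := rfl
  have e1 : |ω i - ((i : ℤ) + 1)| = 1 := by
    rw [hi, hci]
    have heq : ω last - (((n - pCount hn ω : ℕ) : ℤ) + 1) = -1 := by omega
    rw [heq]
    decide
  have h1 := habs i
  rw [e1] at h1
  have h2 := hμlow (σ.symm i)
  rw [← h1] at h2
  rw [hclast] at h2 hA0
  omega
end

section
/- Let λ ∈ ℤⁿ be a regular anti-dominant integral weight. If λ_n > n+1, then the only dominant weight ω in the dot-orbit O_λ satisfying the unitarizability inequality ω_n ≥ n − p(ω) − q(ω)/2 is λ itself. If λ_n = n+1, then the set of such weights is exactly {λ^{(0)}, λ^{(1)}, …, λ^{(p(λ))}}, where λ^{(j)} = (λ_1, …, λ_{n−j}, n−j, …, n−j) (the last j entries all equal to n−j) and p(λ) = #{i : λ_i = λ_n}. -/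
/-- `λ^{(j)} = (λ_1, …, λ_{n−j}, n−j, …, n−j)` (the last `j` entries equal to `n−j`). -/
def lamTrunc {n : ℕ} (lam : Fin n → ℤ) (j : ℕ) : Fin n → ℤ :=
  fun i => if (i : ℕ) < n - j then lam i else (n : ℤ) - (j : ℤ)

/-!
Write `μ = λ + ρ` and `ν = ω + ρ`. The dot action permutes the entries of `μ` and changes their
signs, so for `ω` in the orbit `|ν|` is a rearrangement of `μ`; if `ω` is dominant, `ν` is
strictly decreasing, hence determined by `|ν|` together with its negative entries.

If `ωₙ > n` then `ν > 0`, so `ω = λ`. Otherwise, on the blocks `ωᵢ = ωₙ` and `ωᵢ = ωₙ + 1` the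
entries of `ν` are runs of consecutive integers, which must avoid `0` and, by regularity, cannot
contain both `1` and `-1`; with the unitarity bound this forces `q(ω) = 0` and `p(ω) = M := n - ωₙ`,
so the negative entries of `ν` are `-1, …, -M`. Since `μᵢ = n - i` on the last `p(λ)` positions
and `μᵢ ≥ p(λ) + 2` before them, `μ` can only contain `1, …, M` if `λₙ = n + 1` and `M ≤ p(λ)`;
then `λ^{(M)}` is a dominant element of the orbit with the same negative entries as `ω`.
-/

open Finset Function

section DotAction

variable {n : ℕ}

lemma add_rhoC_apply (v : Fin n → ℤ) (i : Fin n) : (v + rhoC n) i = v i - ((i : ℤ) + 1) := by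
  simp [rhoC, sub_eq_add_neg]

lemma strictAnti_rhoC : StrictAnti (rhoC n) := fun i j hij => by
  simp only [rhoC, neg_lt_neg_iff, add_lt_add_iff_right, Nat.cast_lt, Fin.val_fin_lt, hij]

lemma abs_signedPermAct (σ : Equiv.Perm (Fin n)) (ε : Fin n → ℤˣ) (v : Fin n → ℤ) (i : Fin n) :
    |signedPermAct σ ε v i| = |v (σ.symm i)| := by
  simp [signedPermAct, abs_mul, Int.isUnit_iff_abs_eq.mp (ε i).isUnit]

lemma dotAct_add_rhoC (σ : Equiv.Perm (Fin n)) (ε : Fin n → ℤˣ) (lam : Fin n → ℤ) :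
    dotAct σ ε lam + rhoC n = signedPermAct σ ε (lam + rhoC n) := by
  ext i
  simp only [Pi.add_apply, dotAct, sub_add_cancel]
  rfl

lemma dotAct_one (lam : Fin n → ℤ) : dotAct 1 1 lam = lam := by
  ext i
  simp [dotAct, signedPermAct, Equiv.Perm.one_def]

lemma exists_dotAct_eq_of_abs_eq {lam ω : Fin n → ℤ} (σ : Equiv.Perm (Fin n))
    (h : ∀ i, |(ω + rhoC n) i| = |(lam + rhoC n) (σ.symm i)|) :
    ∃ ε : Fin n → ℤˣ, ω = dotAct σ ε lam := by
  choose ε hε using fun i => show ∃ u : ℤˣ, (ω + rhoC n) i = u * (lam + rhoC n) (σ.symm i) by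
    rcases abs_eq_abs.mp (h i) with h' | h'
    · exact ⟨1, by simp [h']⟩
    · exact ⟨-1, by simp [h']⟩
  refine ⟨ε, ?_⟩
  rw [← add_left_inj (rhoC n), dotAct_add_rhoC]
  ext i
  exact hε i

def IsRegularWeight (lam : Fin n → ℤ) : Prop :=
  Injective (fun i => |(lam + rhoC n) i|) ∧ ∀ i, (lam + rhoC n) i ≠ 0

end DotAction

section SignedRange

variable {ι α : Type*} [AddCommGroup α] [LinearOrder α] [IsOrderedAddMonoid α]

lemma mem_range_iff_of_injective_abs {ν : ι → α} (hinj : Injective fun i => |ν i|) {x : α}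
    (hx : 0 ≤ x) : x ∈ Set.range ν ↔ x ∈ Set.range (fun i => |ν i|) ∧ ∀ i, ν i < 0 → ν i ≠ -x := by
  constructor
  · rintro ⟨i, rfl⟩
    refine ⟨⟨i, abs_of_nonneg hx⟩, fun j hj hji => hj.not_ge ?_⟩
    have : j = i := hinj (by simp [hji])
    rw [this]
    exact hx
  · rintro ⟨⟨i, hi : |ν i| = x⟩, hneg⟩
    rcases le_or_gt 0 (ν i) with h | h
    · exact ⟨i, by rwa [abs_of_nonneg h] at hi⟩
    · exact absurd (by rw [← hi, abs_of_neg h, neg_neg]) (hneg i h)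

lemma eq_of_range_abs_eq [LinearOrder ι] [WellFoundedGT ι] {ν ν' : ι → α} (hν : StrictAnti ν)
    (hν' : StrictAnti ν') (hinj : Injective fun i => |ν i|) (hinj' : Injective fun i => |ν' i|)
    (hrange : Set.range (fun i => |ν i|) = Set.range (fun i => |ν' i|))
    (hneg : ∀ i, ν i < 0 ∨ ν' i < 0 → ν i = ν' i) : ν = ν' := by
  refine (hν.range_inj hν').mp (Set.ext fun x => ?_)
  rcases lt_or_ge x 0 with hx | hx
  · constructor
    · rintro ⟨i, rfl⟩
      exact ⟨i, (hneg i (.inl hx)).symm⟩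
    · rintro ⟨i, rfl⟩
      exact ⟨i, hneg i (.inr hx)⟩
  · rw [mem_range_iff_of_injective_abs hinj hx, mem_range_iff_of_injective_abs hinj' hx, hrange]
    refine and_congr_right fun _ => forall_congr' fun i => ?_
    constructor
    · intro h hi
      rw [← hneg i (.inr hi)]
      exact h (hneg i (.inr hi) ▸ hi)
    · intro h hi
      rw [hneg i (.inl hi)]
      exact h (hneg i (.inl hi) ▸ hi)

end SignedRange

section Orbit

variable {n : ℕ}

def dotOrbit (lam : Fin n → ℤ) : Set (Fin n → ℤ) := {ω | ∃ σ ε, ω = dotAct σ ε lam}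

lemma range_abs_add_rhoC_of_mem_dotOrbit {lam ω : Fin n → ℤ} (hω : ω ∈ dotOrbit lam) :
    Set.range (fun i => |(ω + rhoC n) i|) = Set.range (fun i => |(lam + rhoC n) i|) := by
  obtain ⟨σ, ε, rfl⟩ := hω
  simp_rw [dotAct_add_rhoC, abs_signedPermAct]
  exact σ.symm.surjective.range_comp (fun i => |(lam + rhoC n) i|)

lemma IsRegularWeight.of_mem_dotOrbit {lam ω : Fin n → ℤ} (hreg : IsRegularWeight lam)
    (hω : ω ∈ dotOrbit lam) : IsRegularWeight ω := by
  obtain ⟨σ, ε, rfl⟩ := hω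
  simp only [IsRegularWeight, dotAct_add_rhoC, ← abs_ne_zero (a := signedPermAct _ _ _ _),
    abs_signedPermAct]
  exact ⟨hreg.1.comp σ.symm.injective, fun i => abs_ne_zero.mpr (hreg.2 _)⟩

theorem eq_of_mem_dotOrbit_of_antitone {lam ω ω' : Fin n → ℤ} (hreg : IsRegularWeight lam)
    (hω : ω ∈ dotOrbit lam) (hω' : ω' ∈ dotOrbit lam) (ha : Antitone ω) (ha' : Antitone ω')
    (hneg : ∀ i, (ω + rhoC n) i < 0 ∨ (ω' + rhoC n) i < 0 → ω i = ω' i) : ω = ω' := by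
  have key := eq_of_range_abs_eq (ha.add_strictAnti strictAnti_rhoC)
    (ha'.add_strictAnti strictAnti_rhoC) (hreg.of_mem_dotOrbit hω).1
    (hreg.of_mem_dotOrbit hω').1
    ((range_abs_add_rhoC_of_mem_dotOrbit hω).trans (range_abs_add_rhoC_of_mem_dotOrbit hω').symm)
    (fun i h => by simp [hneg i h])
  exact add_right_cancel key

end Orbit

lemma Fin.sub_card_le_iff_mem_of_isUpperSet {n : ℕ} {s : Finset (Fin n)}
    (hs : IsUpperSet (s : Set (Fin n))) {i : Fin n} : n - #s ≤ i ↔ i ∈ s := by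
  constructor
  · intro hi
    by_contra his
    have hsub : Iic i ⊆ sᶜ := fun j hj => mem_compl.mpr fun hjs => his (hs (mem_Iic.mp hj) hjs)
    have := card_le_card hsub
    rw [Fin.card_Iic, card_compl, Fintype.card_fin] at this
    omega
  · intro his
    have := card_le_card fun j hj => hs (mem_Ici.mp hj) his
    rw [Fin.card_Ici] at this
    omega

lemma Fin.exists_val_eq {n : ℕ} {k : ℤ} (h₀ : 0 ≤ k) (h : k < n) : ∃ i : Fin n, (i : ℤ) = k :=
  ⟨⟨k.toNat, by omega⟩, by simp only; omega⟩

section Counts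

variable {n : ℕ} (hn : 0 < n)

abbrev lastIdx : Fin n := ⟨n - 1, Nat.sub_lt hn one_pos⟩

variable {ω : Fin n → ℤ}

lemma Antitone.apply_lastIdx_le (h : Antitone ω) (i : Fin n) : ω (lastIdx hn) ≤ ω i :=
  h (Fin.le_def.mpr (by simp only; omega))

lemma pCount_add_qCount (ω : Fin n → ℤ) : pCount hn ω + qCount hn ω =
    #(univ.filter fun i => ω i = ω (lastIdx hn) ∨ ω i = ω (lastIdx hn) + 1) := by
  rw [filter_or, card_union_of_disjoint (disjoint_filter.mpr fun _ _ h => by omega)]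
  rfl

lemma pCount_add_qCount_le (ω : Fin n → ℤ) : pCount hn ω + qCount hn ω ≤ n :=
  pCount_add_qCount hn ω ▸ card_le_univ _ |>.trans_eq (Fintype.card_fin n)

lemma Antitone.sub_pCount_le_iff (h : Antitone ω) {i : Fin n} :
    n - pCount hn ω ≤ i ↔ ω i = ω (lastIdx hn) := by
  change n - #(univ.filter fun i => ω i = ω (lastIdx hn)) ≤ i ↔ _
  rw [Fin.sub_card_le_iff_mem_of_isUpperSet]
  · simp
  · intro j k hjk hj
    simp only [coe_filter, mem_univ, true_and, Set.mem_ofPred_eq] at hj ⊢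
    have := h hjk
    have := h.apply_lastIdx_le hn k
    omega

lemma Antitone.sub_pCount_add_qCount_le_iff (h : Antitone ω) {i : Fin n} :
    n - (pCount hn ω + qCount hn ω) ≤ i ↔ ω i ≤ ω (lastIdx hn) + 1 := by
  have := h.apply_lastIdx_le hn i
  rw [pCount_add_qCount, Fin.sub_card_le_iff_mem_of_isUpperSet]
  · simp only [mem_filter, mem_univ, true_and]
    omega
  · intro j k hjk hj
    simp only [coe_filter, mem_univ, true_and, Set.mem_ofPred_eq] at hj ⊢
    have := h hjk
    have := h.apply_lastIdx_le hn k
    omega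

end Counts

section Truncation

variable {n : ℕ}

def Fin.revTail (j : ℕ) (i : Fin n) : Fin n :=
  if h : n - j ≤ i then ⟨2 * n - j - 1 - i, by omega⟩ else i

lemma Fin.revTail_involutive {j : ℕ} (hj : j ≤ n) : Involutive (Fin.revTail (n := n) j) := by
  intro i
  unfold Fin.revTail
  split_ifs <;> ext <;> simp only at * <;> omega

variable {lam : Fin n → ℤ} {j : ℕ}

lemma lamTrunc_zero (lam : Fin n → ℤ) : lamTrunc lam 0 = lam := by
  ext i
  simp [lamTrunc]

lemma lamTrunc_of_lt {i : Fin n} (hi : (i : ℕ) < n - j) : lamTrunc lam j i = lam i := if_pos hi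

lemma lamTrunc_of_le {i : Fin n} (hi : n - j ≤ i) : lamTrunc lam j i = n - j :=
  if_neg (not_lt.mpr hi)

lemma antitone_lamTrunc (hanti : Antitone lam) (hlam : ∀ i, (n : ℤ) ≤ lam i) (j : ℕ) :
    Antitone (lamTrunc lam j) := by
  intro i k hik
  have hik' : (i : ℕ) ≤ k := hik
  unfold lamTrunc
  split_ifs
  · exact hanti hik
  · omega
  · have := hlam i; omega
  · rfl

/-- `λ^{(j)}` is obtained from `λ` by reversing the last `j` entries of `λ + ρ` and changing
their signs. -/
lemma lamTrunc_mem_dotOrbit (hj : j ≤ n) (htail : ∀ i : Fin n, n - j ≤ i → lam i = n + 1) :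
    lamTrunc lam j ∈ dotOrbit lam := by
  let σ := (Fin.revTail_involutive hj).toPerm
  suffices h : ∀ i, |(lamTrunc lam j + rhoC n) i| = |(lam + rhoC n) (σ.symm i)| by
    obtain ⟨ε, hε⟩ := exists_dotAct_eq_of_abs_eq σ h
    exact ⟨σ, ε, hε⟩
  intro i
  rw [Involutive.toPerm_symm, Involutive.coe_toPerm, add_rhoC_apply, add_rhoC_apply]
  unfold Fin.revTail
  split_ifs with hi
  · rw [lamTrunc_of_le hi, htail _ (by simp only; omega), ← abs_neg]
    congr 1
    push_cast [Nat.cast_sub (show j + 1 + i ≤ 2 * n by omega)]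
    omega
  · rw [lamTrunc_of_lt (by omega)]

end Truncation

section Unitarizable

variable {n : ℕ} (hn : 0 < n)

/-- `ωₙ ≥ n − p(ω) − q(ω)/2`, doubled to stay in `ℤ`. -/
def IsUnitarizable (ω : Fin n → ℤ) : Prop :=
  2 * ω (lastIdx hn) ≥ 2 * (n : ℤ) - 2 * (pCount hn ω : ℤ) - (qCount hn ω : ℤ)

def unitarizableDotOrbit (lam : Fin n → ℤ) : Set (Fin n → ℤ) :=
  {ω | ω ∈ dotOrbit lam ∧ Antitone ω ∧ IsUnitarizable hn ω}

variable {lam : Fin n → ℤ} {j : ℕ}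

lemma isUnitarizable_lamTrunc (hanti : Antitone lam) (hlam : ∀ i, (n : ℤ) ≤ lam i)
    (hj : j ≤ n) : IsUnitarizable hn (lamTrunc lam j) := by
  unfold IsUnitarizable
  rcases j.eq_zero_or_pos with rfl | hj₀
  · rw [lamTrunc_zero]
    have := hlam (lastIdx hn)
    omega
  · have hlast : lamTrunc lam j (lastIdx hn) = n - j := lamTrunc_of_le (by simp only; omega)
    have hp : n - pCount hn (lamTrunc lam j) ≤ n - j :=
      ((antitone_lamTrunc hanti hlam j).sub_pCount_le_iff hn (i := ⟨n - j, by omega⟩)).mpr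
        (by rw [hlast, lamTrunc_of_le le_rfl])
    omega

lemma lamTrunc_mem_unitarizableDotOrbit (hanti : Antitone lam)
    (hlast : lam (lastIdx hn) = n + 1) (hj : j ≤ pCount hn lam) :
    lamTrunc lam j ∈ unitarizableDotOrbit hn lam := by
  have hlam : ∀ i, (n : ℤ) ≤ lam i := fun i => by
    have := hanti.apply_lastIdx_le hn i
    omega
  have hjn : j ≤ n := hj.trans (Nat.le_of_add_right_le (pCount_add_qCount_le hn lam))
  have htail : ∀ i : Fin n, n - j ≤ i → lam i = n + 1 := fun i hi =>
    ((hanti.sub_pCount_le_iff hn).mp (by omega)).trans hlast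
  exact ⟨lamTrunc_mem_dotOrbit hjn htail, antitone_lamTrunc hanti hlam j,
    isUnitarizable_lamTrunc hn hanti hlam hjn⟩

end Unitarizable

section Classification

variable {n : ℕ} (hn : 0 < n) {lam ω : Fin n → ℤ}

lemma add_rhoC_pos (hanti : Antitone lam) (hlast : (n : ℤ) ≤ lam (lastIdx hn))
    (hreg : IsRegularWeight lam) (k : Fin n) : 0 < (lam + rhoC n) k := by
  have h₀ := hreg.2 (lastIdx hn)
  have h₁ := hanti.apply_lastIdx_le hn k
  rw [add_rhoC_apply] at h₀ ⊢
  simp only at h₀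
  omega

lemma IsUnitarizable.qCount_eq_zero_and_pCount_eq (hu : IsUnitarizable hn ω) (ha : Antitone ω)
    (hreg : IsRegularWeight ω) (hle : ω (lastIdx hn) ≤ n) :
    qCount hn ω = 0 ∧ (pCount hn ω : ℤ) = n - ω (lastIdx hn) := by
  unfold IsUnitarizable at hu
  set c := ω (lastIdx hn) with hc
  have hν : ∀ i : Fin n, ω i ≠ i + 1 := fun i h => hreg.2 i (by rw [add_rhoC_apply, h, sub_self])
  have hp : ∀ i : Fin n, n - pCount hn ω ≤ i ↔ ω i = c := fun i => ha.sub_pCount_le_iff hn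
  have hpq : ∀ i : Fin n, n - (pCount hn ω + qCount hn ω) ≤ i ↔ ω i ≤ c + 1 :=
    fun i => ha.sub_pCount_add_qCount_le_iff hn
  have hge : ∀ i, c ≤ ω i := ha.apply_lastIdx_le hn
  have hsum := pCount_add_qCount_le hn ω
  have hcn : c < n := lt_of_le_of_ne hle fun h => hν (lastIdx hn) (by rw [← hc, h]; simp only; omega)
  -- otherwise the block `ω i = c` contains the position `i = c - 1`, where `ω i = i + 1`
  have hpc : (pCount hn ω : ℤ) ≤ n - c := by
    by_contra h
    obtain ⟨i, hi⟩ : ∃ i : Fin n, (i : ℤ) = c - 1 := Fin.exists_val_eq (by omega) (by omega)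
    exact hν i (by rw [(hp i).mp (by omega)]; omega)
  have hq : qCount hn ω = 0 := by
    by_contra hq
    rcases hpc.lt_or_eq with hlt | heq
    · -- the block `ω i = c + 1` contains the position `i = c`
      obtain ⟨i, hi⟩ : ∃ i : Fin n, (i : ℤ) = c := Fin.exists_val_eq (by omega) hcn
      have := (hpq i).mp (by omega)
      have := (hp i).not.mp (by omega)
      exact hν i (by have := hge i; omega)
    · -- positions `c - 1` and `c` carry the shifted values `1` and `-1`
      obtain ⟨i, hi⟩ : ∃ i : Fin n, (i : ℤ) = c - 1 := Fin.exists_val_eq (by omega) (by omega)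
      obtain ⟨i', hi'⟩ : ∃ i : Fin n, (i : ℤ) = c := Fin.exists_val_eq (by omega) hcn
      have h₁ := (hpq i).mp (by omega)
      have h₂ := (hp i).not.mp (by omega)
      have h₃ := (hp i').mp (by omega)
      have : i = i' := hreg.1 <| by
        simp only [add_rhoC_apply]
        rw [show ω i - ((i : ℤ) + 1) = 1 by have := hge i; omega,
          show ω i' - ((i' : ℤ) + 1) = -1 by omega, abs_neg]
      subst this
      omega
  exact ⟨hq, by omega⟩

lemma le_pCount_of_forall_mem_range (hanti : Antitone lam) (hlast : (n : ℤ) ≤ lam (lastIdx hn))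
    (hreg : IsRegularWeight lam) {M : ℕ} (hM : 1 ≤ M)
    (hvals : ∀ m : ℤ, 1 ≤ m → m ≤ M → m ∈ Set.range fun k => |(lam + rhoC n) k|) :
    lam (lastIdx hn) = n + 1 ∧ M ≤ pCount hn lam := by
  have hμ : ∀ k, |(lam + rhoC n) k| = lam k - ((k : ℤ) + 1) := fun k => by
    rw [abs_of_pos (add_rhoC_pos hn hanti hlast hreg k), add_rhoC_apply]
  have hne := hreg.2 (lastIdx hn)
  rw [add_rhoC_apply] at hne
  simp only at hne
  have hge : ∀ k, lam (lastIdx hn) ≤ lam k := hanti.apply_lastIdx_le hn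
  have hlast' : lam (lastIdx hn) = n + 1 := by
    obtain ⟨k, hk : |(lam + rhoC n) k| = 1⟩ := hvals 1 le_rfl (by exact_mod_cast hM)
    have := hge k
    rw [hμ] at hk
    omega
  refine ⟨hlast', ?_⟩
  -- the shifted entries of `λ` skip the value `p(λ) + 1`
  by_contra! h
  obtain ⟨k, hk : |(lam + rhoC n) k| = pCount hn lam + 1⟩ :=
    hvals (pCount hn lam + 1) (by omega) (by omega)
  rw [hμ] at hk
  have hp := hanti.sub_pCount_le_iff hn (i := k)
  have := hge k
  omega

lemma exists_eq_lamTrunc_of_mem_unitarizableDotOrbit (hanti : Antitone lam)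
    (hlast : (n : ℤ) ≤ lam (lastIdx hn)) (hreg : IsRegularWeight lam)
    (hω : ω ∈ unitarizableDotOrbit hn lam) (hle : ω (lastIdx hn) ≤ n) :
    lam (lastIdx hn) = n + 1 ∧ ∃ j ≤ pCount hn lam, ω = lamTrunc lam j := by
  obtain ⟨horb, ha, hu⟩ := hω
  have hregω := hreg.of_mem_dotOrbit horb
  obtain ⟨hq, hp⟩ := hu.qCount_eq_zero_and_pCount_eq hn ha hregω hle
  set M := pCount hn ω
  have htail : ∀ i : Fin n, n - M ≤ i ↔ ω i = n - M := fun i => by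
    rw [ha.sub_pCount_le_iff hn]
    omega
  have hhead : ∀ i : Fin n, i < n - M → n - M + 2 ≤ ω i := fun i hi => by
    have := (ha.sub_pCount_add_qCount_le_iff hn (i := i)).not.mp (by omega)
    omega
  have hM : 1 ≤ M := by
    have := hregω.2 (lastIdx hn)
    rw [add_rhoC_apply] at this
    simp only at this
    omega
  have hMn := pCount_add_qCount_le hn ω
  -- the last `M` shifted entries of `ω` are `-1, …, -M`
  have hvals : ∀ m : ℤ, 1 ≤ m → m ≤ M → m ∈ Set.range fun k => |(lam + rhoC n) k| := by
    intro m h₁ h₂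
    obtain ⟨i, hi⟩ : ∃ i : Fin n, (i : ℤ) = n - M + m - 1 :=
      Fin.exists_val_eq (by omega) (by omega)
    rw [← range_abs_add_rhoC_of_mem_dotOrbit horb]
    refine ⟨i, ?_⟩
    simp only [add_rhoC_apply, (htail i).mp (by omega)]
    rw [abs_of_neg (by omega)]
    omega
  obtain ⟨hlast', hMp⟩ := le_pCount_of_forall_mem_range hn hanti hlast hreg hM hvals
  obtain ⟨horb', ha', -⟩ := lamTrunc_mem_unitarizableDotOrbit hn hanti hlast' hMp
  refine ⟨hlast', M, hMp, eq_of_mem_dotOrbit_of_antitone hreg horb horb' ha ha' fun i hi => ?_⟩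
  by_cases h : (i : ℕ) < n - M
  · have := hhead i h
    have := add_rhoC_pos hn hanti hlast hreg i
    simp only [add_rhoC_apply, lamTrunc_of_lt h] at hi this
    omega
  · rw [lamTrunc_of_le (not_lt.mp h), (htail i).mp (not_lt.mp h)]

lemma eq_of_mem_dotOrbit_of_lt (hanti : Antitone lam) (hlast : (n : ℤ) ≤ lam (lastIdx hn))
    (hreg : IsRegularWeight lam) (hω : ω ∈ dotOrbit lam) (ha : Antitone ω)
    (hlt : (n : ℤ) < ω (lastIdx hn)) : ω = lam := by
  refine eq_of_mem_dotOrbit_of_antitone hreg hω ⟨1, 1, (dotAct_one lam).symm⟩ ha hanti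
    fun i hi => absurd hi ?_
  have := ha.apply_lastIdx_le hn i
  have := add_rhoC_pos hn hanti hlast hreg i
  simp only [add_rhoC_apply] at this ⊢
  omega

end Classification

/-- For a regular anti-dominant integral weight `λ`, the set of dominant weights `ω` in
the dot-orbit of `λ` satisfying the unitarizability inequality `ωₙ ≥ n − p(ω) − q(ω)/2`
is `{λ}` if `λₙ > n+1`, and is exactly `{λ^{(0)}, …, λ^{(p(λ))}}` if `λₙ = n+1`. -/
theorem unitarizable_dot_orbit {n : ℕ} (hn : 0 < n) (lam : Fin n → ℤ)
    (hanti : Antitone lam)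
    (hlast : (n : ℤ) ≤ lam ⟨n - 1, Nat.sub_lt hn one_pos⟩)
    (hreg : (∀ i j : Fin n, i ≠ j → |lam i - ((i : ℤ) + 1)| ≠ |lam j - ((j : ℤ) + 1)|) ∧
      ∀ i : Fin n, |lam i - ((i : ℤ) + 1)| ≠ 0) :
    ((n : ℤ) + 1 < lam ⟨n - 1, Nat.sub_lt hn one_pos⟩ →
      {ω : Fin n → ℤ |
        (∃ (σ : Equiv.Perm (Fin n)) (ε : Fin n → ℤˣ), ω = dotAct σ ε lam) ∧
          Antitone ω ∧
          2 * ω ⟨n - 1, Nat.sub_lt hn one_pos⟩ ≥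
            2 * (n : ℤ) - 2 * (pCount hn ω : ℤ) - (qCount hn ω : ℤ)} = {lam}) ∧
    (lam ⟨n - 1, Nat.sub_lt hn one_pos⟩ = (n : ℤ) + 1 →
      {ω : Fin n → ℤ |
        (∃ (σ : Equiv.Perm (Fin n)) (ε : Fin n → ℤˣ), ω = dotAct σ ε lam) ∧
          Antitone ω ∧
          2 * ω ⟨n - 1, Nat.sub_lt hn one_pos⟩ ≥
            2 * (n : ℤ) - 2 * (pCount hn ω : ℤ) - (qCount hn ω : ℤ)} =
        {ω : Fin n → ℤ | ∃ j ≤ pCount hn lam, ω = lamTrunc lam j}) := by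
  have hreg' : IsRegularWeight lam :=
    ⟨fun i j h => by_contra fun hij => hreg.1 i j hij (by simpa only [add_rhoC_apply] using h),
      fun i h => hreg.2 i (by rw [← add_rhoC_apply, h, abs_zero])⟩
  have hclass : ∀ ω ∈ unitarizableDotOrbit hn lam, ω = lam ∨
      (lam (lastIdx hn) = n + 1 ∧ ∃ j ≤ pCount hn lam, ω = lamTrunc lam j) := fun ω hω =>
    (lt_or_ge (n : ℤ) (ω (lastIdx hn))).imp
      (eq_of_mem_dotOrbit_of_lt hn hanti hlast hreg' hω.1 hω.2.1)
      (exists_eq_lamTrunc_of_mem_unitarizableDotOrbit hn hanti hlast hreg' hω)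
  change (_ → unitarizableDotOrbit hn lam = _) ∧ (_ → unitarizableDotOrbit hn lam = _)
  refine ⟨fun (hgt : (n : ℤ) + 1 < lam (lastIdx hn)) => Set.eq_singleton_iff_unique_mem.mpr ⟨?_, fun ω hω => ?_⟩, fun (heq : lam (lastIdx hn) = n + 1) => ?_⟩
  · exact ⟨⟨1, 1, (dotAct_one lam).symm⟩, hanti, by unfold IsUnitarizable; omega⟩
  · exact (hclass ω hω).resolve_right fun h => by omega
  · ext ω
    refine ⟨fun hω => ?_, fun ⟨j, hj, hω⟩ => hω ▸ lamTrunc_mem_unitarizableDotOrbit hn hanti heq hj⟩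
    rcases hclass ω hω with rfl | ⟨-, h⟩
    · exact ⟨0, Nat.zero_le _, (lamTrunc_zero ω).symm⟩
    · exact h
end

section
/- Define g : ℤⁿ → ℤⁿ as follows. For ω = (ω_1,…,ω_n), first set ω′_1 = ω_1 and, for 2 ≤ i ≤ n, ω′_i = ω_{i−1} if ω_{i−1} − ω_i is even and ω′_i = ω_{i−1} − 1 if ω_{i−1} − ω_i is odd. Then let X = {i : 2 ≤ i ≤ n, ω_{i−1} ≠ ω′_i}, let X′ = X if #X is even and X′ = X minus its maximal element if #X is odd, and set g(ω)_i = ω′_i + 1 if i ∈ X′ and g(ω)_i = ω′_i otherwise. Then for every dominant ω ∈ ℤⁿ (ω_1 ≥ … ≥ ω_n), the quantity j(ω) = #{ℓ : ω_ℓ ≡ ω_1 (mod 2)} satisfies j(g(ω)) = j(ω). -/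
/-- First step of the operation: `ω′₁ = ω₁`; for `i ≥ 2`, `ω′ᵢ = ω_{i−1}` if
`ω_{i−1} − ωᵢ` is even and `ω′ᵢ = ω_{i−1} − 1` otherwise (0-indexed here). -/
def gAux (ω : ℕ → ℤ) : ℕ → ℤ := fun i =>
  if i = 0 then ω 0
  else if (ω (i - 1) - ω i) % 2 = 0 then ω (i - 1) else ω (i - 1) - 1

/-- `X = {i : 2 ≤ i ≤ n, ω_{i−1} ≠ ω′ᵢ}` (0-indexed: `1 ≤ i < n`). -/
def gSet (n : ℕ) (ω : ℕ → ℤ) : Finset ℕ :=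
  (Finset.Ico 1 n).filter fun i => ω (i - 1) ≠ gAux ω i

/-- `X′ = X` if `#X` is even, and `X` minus its maximal element otherwise. -/
def gSet' (n : ℕ) (ω : ℕ → ℤ) : Finset ℕ :=
  if Even (gSet n ω).card then gSet n ω
  else (gSet n ω).erase ((gSet n ω).max.unbotD 0)

/-- The map `g : ℤⁿ → ℤⁿ`: `g(ω)ᵢ = ω′ᵢ + 1` if `i ∈ X′` and `g(ω)ᵢ = ω′ᵢ` otherwise. -/
def gMap (n : ℕ) (ω : ℕ → ℤ) : ℕ → ℤ := fun i =>
  if i ∈ gSet' n ω then gAux ω i + 1 else gAux ω i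

/-- `j(ω) = #{ℓ < n : ω_ℓ ≡ ω₁ (mod 2)}`. -/
def jCount (n : ℕ) (ω : ℕ → ℤ) : ℕ :=
  ((Finset.range n).filter fun ℓ => ω ℓ % 2 = ω 0 % 2).card

/-!
Since `ω′ᵢ ≡ ωᵢ (mod 2)`, the map `g` toggles the parity of `ωᵢ` exactly for `i ∈ X′`, and fixes
`ω₁`. The set `X` consists of the positions where the parity of `ω` changes, so for `x ∈ X` the
parity of `ω_x` agrees with that of `ω₁` iff the rank of `x` in `X` is even; this rank is the
same in `X′`, which has even cardinality. Hence exactly half of `X′` has the parity of `ω₁`, and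
toggling the parities on `X′` leaves the count `j` unchanged.
-/

open Finset

namespace Finset

section DecidableEq

variable {α : Type*} [DecidableEq α]

theorem card_filter_sdiff_add_card_filter {s t : Finset α}
    (hts : t ⊆ s) (r : α → Prop) [DecidablePred r] :
    #{x ∈ s \ t | r x} + #{x ∈ t | r x} = #{x ∈ s | r x} := by
  rw [← card_union_of_disjoint (disjoint_filter_filter sdiff_disjoint), ← filter_union,
    sdiff_union_of_subset hts]

theorem card_filter_eq_of_toggle {s t : Finset α}
    {p q : α → Prop} [DecidablePred p] [DecidablePred q] (hts : t ⊆ s)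
    (htoggle : ∀ x ∈ s, q x ↔ (p x ↔ x ∉ t)) (hhalf : 2 * #{x ∈ t | p x} = #t) :
    #{x ∈ s | q x} = #{x ∈ s | p x} := by
  have hout : {x ∈ s \ t | q x} = {x ∈ s \ t | p x} := filter_congr fun x hx => by
    rw [htoggle x (mem_sdiff.1 hx).1]
    simp [(mem_sdiff.1 hx).2]
  have hin : {x ∈ t | q x} = {x ∈ t | ¬p x} := filter_congr fun x hx => by
    rw [htoggle x (hts hx)]
    simp [hx]
  have hcompl : #{x ∈ t | p x} + #{x ∈ t | ¬p x} = #t := card_filter_add_card_filter_not p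
  rw [← card_filter_sdiff_add_card_filter hts, ← card_filter_sdiff_add_card_filter hts,
    hout, hin]
  omega

end DecidableEq

section LinearOrder

variable {α : Type*} [LinearOrder α]

theorem max_unbotD_eq_max' {s : Finset α} (hs : s.Nonempty) (d : α) :
    s.max.unbotD d = s.max' hs := by
  rw [← coe_max' hs, WithBot.unbotD_coe]

theorem filter_le_erase_of_lt {s : Finset α} {a x : α} (h : x < a) :
    {y ∈ s.erase a | y ≤ x} = {y ∈ s | y ≤ x} := by
  rw [filter_erase, erase_eq_of_notMem]
  simp [h]

theorem card_filter_even_rank (s : Finset α) :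
    #{x ∈ s | Even #{y ∈ s | y ≤ x}} = #s / 2 := by
  induction s using Finset.induction_on_max with
  | empty => simp
  | insert a s hlt ih =>
    have ha : a ∉ s := fun h => (hlt a h).false
    have hrank : ∀ x ∈ s, {y ∈ insert a s | y ≤ x} = {y ∈ s | y ≤ x} := fun x hx => by
      rw [filter_insert, if_neg (hlt x hx).not_ge]
    have htop : {y ∈ insert a s | y ≤ a} = insert a s :=
      filter_true_of_mem fun y hy => (mem_insert.1 hy).elim le_of_eq fun h => (hlt y h).le
    rw [filter_insert, htop, filter_congr fun x hx => by rw [hrank x hx], card_insert_of_notMem ha]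
    split_ifs with heven
    · rw [card_insert_of_notMem (fun h => ha (mem_filter.1 h).1), ih]
      rw [Nat.even_add_one] at heven
      grind
    · rw [Nat.even_add_one, not_not] at heven
      rw [ih]
      grind

end LinearOrder

end Finset

theorem gAux_emod_two (ω : ℕ → ℤ) (i : ℕ) : gAux ω i % 2 = ω i % 2 := by
  unfold gAux
  split_ifs with h0 <;> first | rw [h0] | omega

theorem mem_gSet (n : ℕ) (ω : ℕ → ℤ) (i : ℕ) :
    i ∈ gSet n ω ↔ 1 ≤ i ∧ i < n ∧ ω (i - 1) % 2 ≠ ω i % 2 := by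
  unfold gSet gAux
  simp only [mem_filter, mem_Ico]
  split_ifs <;> omega

theorem emod_two_eq_iff_even_card_gSet (n : ℕ) (ω : ℕ → ℤ) {i : ℕ} (hi : i < n) :
    ω i % 2 = ω 0 % 2 ↔ Even #{y ∈ gSet n ω | y ≤ i} := by
  induction i with
  | zero =>
    have : {y ∈ gSet n ω | y ≤ 0} = ∅ := filter_false_of_mem fun y hy => by
      rw [mem_gSet] at hy
      omega
    rw [this, card_empty]
    simp
  | succ i ih =>
    have hsplit : {y ∈ gSet n ω | y ≤ i + 1} =
        {y ∈ gSet n ω | y ≤ i} ∪ {y ∈ gSet n ω | y = i + 1} := by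
      rw [← filter_or]
      exact filter_congr fun y _ => Nat.le_succ_iff
    have hdisj : Disjoint {y ∈ gSet n ω | y ≤ i} {y ∈ gSet n ω | y = i + 1} :=
      disjoint_filter.2 fun y _ h => by omega
    rw [hsplit, card_union_of_disjoint hdisj, filter_eq']
    split_ifs with hmem <;> rw [mem_gSet, Nat.add_sub_cancel] at hmem
    · rw [card_singleton, Nat.even_add_one, ← ih (by omega)]
      omega
    · rw [card_empty, add_zero, ← ih (by omega)]
      omega

theorem gSet'_subset_gSet (n : ℕ) (ω : ℕ → ℤ) : gSet' n ω ⊆ gSet n ω := by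
  unfold gSet'
  split_ifs
  exacts [Subset.refl _, erase_subset _ _]

theorem even_card_gSet' (n : ℕ) (ω : ℕ → ℤ) : Even #(gSet' n ω) := by
  unfold gSet'
  split_ifs with heven
  · exact heven
  · have hne : (gSet n ω).Nonempty := nonempty_of_ne_empty fun h => by simp [h] at heven
    have hpos := hne.card_pos
    rw [max_unbotD_eq_max' hne, card_erase_of_mem (max'_mem _ hne), Nat.even_iff]
    rw [Nat.even_iff] at heven
    omega

theorem filter_le_gSet' (n : ℕ) (ω : ℕ → ℤ) {x : ℕ} (hx : x ∈ gSet' n ω) :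
    {y ∈ gSet' n ω | y ≤ x} = {y ∈ gSet n ω | y ≤ x} := by
  unfold gSet' at hx ⊢
  split_ifs at hx ⊢
  · rfl
  · have hne : (gSet n ω).Nonempty := ⟨x, mem_of_mem_erase hx⟩
    rw [max_unbotD_eq_max' hne] at hx ⊢
    exact filter_le_erase_of_lt
      (lt_of_le_of_ne (le_max' _ _ (mem_of_mem_erase hx)) (ne_of_mem_erase hx))

theorem two_mul_card_filter_gSet' (n : ℕ) (ω : ℕ → ℤ) :
    2 * #{x ∈ gSet' n ω | ω x % 2 = ω 0 % 2} = #(gSet' n ω) := by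
  have hrank : {x ∈ gSet' n ω | ω x % 2 = ω 0 % 2} =
      {x ∈ gSet' n ω | Even #{y ∈ gSet' n ω | y ≤ x}} :=
    filter_congr fun x hx => by
      rw [filter_le_gSet' n ω hx]
      exact emod_two_eq_iff_even_card_gSet n ω
        ((mem_gSet n ω x).1 (gSet'_subset_gSet n ω hx)).2.1
  rw [hrank, card_filter_even_rank]
  exact Nat.two_mul_div_two_of_even (even_card_gSet' n ω)

theorem gMap_zero (n : ℕ) (ω : ℕ → ℤ) : gMap n ω 0 = ω 0 := by
  have h0 : 0 ∉ gSet' n ω := fun h => by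
    have := (mem_gSet n ω 0).1 (gSet'_subset_gSet n ω h)
    omega
  simp [gMap, gAux, h0]

theorem gMap_emod_two_eq_iff (n : ℕ) (ω : ℕ → ℤ) (i : ℕ) :
    gMap n ω i % 2 = ω 0 % 2 ↔ (ω i % 2 = ω 0 % 2 ↔ i ∉ gSet' n ω) := by
  have := gAux_emod_two ω i
  unfold gMap
  split_ifs with h <;> simp only [h, not_true, not_false_iff, iff_true, iff_false] <;> omega

theorem jCount_gMap_general (n : ℕ) (ω : ℕ → ℤ) :
    jCount n (gMap n ω) = jCount n ω := by
  have hsub : gSet' n ω ⊆ range n := fun x hx =>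
    mem_range.2 ((mem_gSet n ω x).1 (gSet'_subset_gSet n ω hx)).2.1
  unfold jCount
  rw [gMap_zero]
  exact card_filter_eq_of_toggle hsub (fun i _ => gMap_emod_two_eq_iff n ω i)
    (two_mul_card_filter_gSet' n ω)

/-- For every dominant `ω ∈ ℤⁿ`, the parity-count statistic
`j(ω) = #{ℓ : ω_ℓ ≡ ω₁ (mod 2)}` satisfies `j(g(ω)) = j(ω)`. -/
theorem jCount_gMap (n : ℕ) (ω : ℕ → ℤ)
    (hdom : ∀ i : ℕ, i + 1 < n → ω (i + 1) ≤ ω i) :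
    jCount n (gMap n ω) = jCount n ω :=
  jCount_gMap_general n ω
end
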